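/- Let G be a signed graph, S ⊆ V(G), and C ⊆ V(G)∖S a vertex set inducing a clique in G all of whose edges are negative. Let X ⊆ C be such that |X| > (|C| + |N_G(X) ∩ S|)/2, every neighbor in G of every vertex of X lies in C ∪ S, and all vertices x ∈ X have the same set of positive neighbors in S (equal to N_G^+(X) ∩ S) and the same set of negative neighbors in S (equal to N_G^−(X) ∩ S). Then for any distinct x1, x2 ∈ X there exists a partition (V1,V2) of V(G) whose induced balanced subgraph has β(G) edges and such that x1 ∈ V1 and x2 ∈ V2. -/

import Mathlib

/-!
Take an optimal partition `(A, Aᶜ)` with `x₁ ∈ A` and suppose `x₂ ∈ A`. Any two vertices of `X`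
are twins of the signed graph: `C` is a negative clique and their neighbours in `S` carry the
same signs. So if some `x' ∈ X` lies outside `A`, the transposition of `x₂` and `x'` is a
sign-preserving automorphism, and it carries `A` to an optimal partition separating `x₁` from
`x₂`. Otherwise `X ⊆ A`, and moving `x₂` to the other side makes the `|X| - 1` negative edges
from `x₂` to `X` consistent while breaking at most `|C \ X| + |N(X) ∩ S| < |X|` edges.
-/

/-- Sign convention: `true` = positive edge, `false` = negative edge.
An edge `e` is *consistent* with the partition `(A, Aᶜ)` of the vertex set if it is
positive when both endpoints lie on the same side and negative otherwise. -/
def SignConsistent {V : Type*} (sign : Sym2 V → Bool) (A : Set V) (e : Sym2 V) : Prop :=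
  ∀ u v : V, e = s(u, v) → (sign e = true ↔ (u ∈ A ↔ v ∈ A))

/-- The number of edges of the balanced subgraph induced by the partition `(A, Aᶜ)`. -/
noncomputable def balCount {V : Type*} (G : SimpleGraph V) (sign : Sym2 V → Bool)
    (A : Set V) : ℕ :=
  {e | e ∈ G.edgeSet ∧ SignConsistent sign A e}.ncard

/-- `beta G sign` = β(G): the maximum number of edges of a balanced subgraph of the
signed graph `(G, sign)`. -/
noncomputable def beta {V : Type*} (G : SimpleGraph V) (sign : Sym2 V → Bool) : ℕ :=
  sSup {n | ∃ A : Set V, n = balCount G sign A}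

/-- The Poljak–Turzík bound `pt G = m/2 + (n − t)/4`, where `m` is the number of edges,
`n` the number of vertices and `t` the number of connected components. -/
noncomputable def pt {V : Type*} (G : SimpleGraph V) : ℚ :=
  (G.edgeSet.ncard : ℚ) / 2 +
    ((Nat.card V : ℚ) - (Nat.card G.ConnectedComponent : ℚ)) / 4

/-- β of the signed subgraph induced on the vertex set `U`. -/
noncomputable def betaOn {V : Type*} (G : SimpleGraph V) (sign : Sym2 V → Bool)
    (U : Set V) : ℕ :=
  beta (G.induce U) (fun e => sign (Sym2.map Subtype.val e))

/-- `pt` of the subgraph induced on the vertex set `U`. -/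
noncomputable def ptOn {V : Type*} (G : SimpleGraph V) (U : Set V) : ℚ :=
  pt (G.induce U)

/-- The signed graph `(G, sign)` is balanced: some partition `(A, Aᶜ)` is consistent
with every edge. -/
def IsBalanced {V : Type*} (G : SimpleGraph V) (sign : Sym2 V → Bool) : Prop :=
  ∃ A : Set V, ∀ u v : V, G.Adj u v → (sign s(u, v) = true ↔ (u ∈ A ↔ v ∈ A))

/-- `a`, `b`, `c` form a positive triangle: all three edges exist and the number of
negative edges among them is even. -/
def PositiveTriangle {V : Type*} (G : SimpleGraph V) (sign : Sym2 V → Bool)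
    (a b c : V) : Prop :=
  G.Adj a b ∧ G.Adj b c ∧ G.Adj c a ∧
    Even ((if sign s(a, b) then 0 else 1) + (if sign s(b, c) then 0 else 1) +
      (if sign s(c, a) then 0 else 1))

/-- `X` is (the vertex set of) a connected component of `G − S`. -/
def IsCompOf {V : Type*} (G : SimpleGraph V) (S X : Set V) : Prop :=
  Disjoint X S ∧ (G.induce X).Connected ∧
    ∀ x ∈ X, ∀ y : V, G.Adj x y → y ∉ S → y ∈ X

/-- The neighborhood of a vertex set `X`. -/
def nbhd {V : Type*} (G : SimpleGraph V) (X : Set V) : Set V :=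
  {v | v ∉ X ∧ ∃ x ∈ X, G.Adj x v}

open Set

section

variable {V : Type*}

lemma signConsistent_mk_iff (sign : Sym2 V → Bool) (A : Set V) (u v : V) :
    SignConsistent sign A s(u, v) ↔ (sign s(u, v) = true ↔ (u ∈ A ↔ v ∈ A)) := by
  refine ⟨fun h => h u v rfl, fun h a b hab => ?_⟩
  rcases Sym2.eq_iff.mp hab with ⟨rfl, rfl⟩ | ⟨rfl, rfl⟩
  · exact h
  · exact h.trans Iff.comm

section Balanced

variable (G : SimpleGraph V) (sign : Sym2 V → Bool)

lemma balCount_compl (A : Set V) : balCount G sign Aᶜ = balCount G sign A := by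
  unfold balCount
  congr 1
  ext e
  induction e using Sym2.ind with
  | _ u v =>
    simp only [mem_ofPred_eq, signConsistent_mk_iff, mem_compl_iff, not_iff_not]

lemma balCount_le_ncard_edgeSet [Finite V] (A : Set V) :
    balCount G sign A ≤ G.edgeSet.ncard :=
  ncard_le_ncard (fun _ he => he.1)

lemma balCount_le_beta [Finite V] (A : Set V) : balCount G sign A ≤ beta G sign :=
  le_csSup ⟨_, by rintro n ⟨B, rfl⟩; exact balCount_le_ncard_edgeSet G sign B⟩ ⟨A, rfl⟩

lemma exists_balCount_eq_beta_and_mem [Finite V] (x : V) :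
    ∃ A : Set V, balCount G sign A = beta G sign ∧ x ∈ A := by
  obtain ⟨A, hA⟩ := Nat.sSup_mem (s := {n | ∃ A : Set V, n = balCount G sign A})
    ⟨_, ∅, rfl⟩ ⟨_, by rintro n ⟨B, rfl⟩; exact balCount_le_ncard_edgeSet G sign B⟩
  by_cases hx : x ∈ A
  · exact ⟨A, hA.symm, hx⟩
  · exact ⟨Aᶜ, (balCount_compl G sign A).trans hA.symm, hx⟩

lemma balCount_preimage_iso [Finite V] (σ : G ≃g G)
    (hσ : ∀ u v, G.Adj u v → sign s(σ u, σ v) = sign s(u, v)) (A : Set V) :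
    balCount G sign (σ ⁻¹' A) = balCount G sign A := by
  have hpre : {e | e ∈ G.edgeSet ∧ SignConsistent sign (σ ⁻¹' A) e} =
      Sym2.map σ ⁻¹' {e | e ∈ G.edgeSet ∧ SignConsistent sign A e} := by
    ext e
    induction e using Sym2.ind with
    | _ u v =>
      simp only [mem_ofPred_eq, mem_preimage, Sym2.map_mk, SimpleGraph.mem_edgeSet,
        signConsistent_mk_iff, σ.map_adj_iff]
      exact and_congr_right fun huv => by rw [hσ u v huv]
  rw [balCount, balCount, hpre]
  refine ncard_preimage_of_injective_subset_range (Sym2.map.injective σ.injective) ?_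
  intro e _
  exact ⟨Sym2.map σ.symm e, by simp [Sym2.map_map]⟩

def consistentNbrs (A : Set V) (x : V) : Set V :=
  {v | G.Adj x v ∧ SignConsistent sign A s(x, v)}

lemma balCount_eq_add_ncard_consistentNbrs [Finite V] (A : Set V) (x : V) :
    balCount G sign A = {e | e ∈ G.edgeSet ∧ SignConsistent sign A e ∧ x ∉ e}.ncard +
      (consistentNbrs G sign A x).ncard := by
  have hsplit : {e | e ∈ G.edgeSet ∧ SignConsistent sign A e} =
      {e | e ∈ G.edgeSet ∧ SignConsistent sign A e ∧ x ∉ e} ∪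
        (fun v => s(x, v)) '' consistentNbrs G sign A x := by
    ext e
    simp only [mem_ofPred_eq, mem_union, mem_image, consistentNbrs]
    constructor
    · rintro ⟨he, hc⟩
      by_cases hxe : x ∈ e
      · obtain ⟨w, rfl⟩ := Sym2.mem_iff_exists.mp hxe
        exact Or.inr ⟨w, ⟨he, hc⟩, rfl⟩
      · exact Or.inl ⟨he, hc, hxe⟩
    · rintro (⟨he, hc, -⟩ | ⟨w, ⟨hw, hc⟩, rfl⟩)
      exacts [⟨he, hc⟩, ⟨hw, hc⟩]
  have hdisj : Disjoint {e | e ∈ G.edgeSet ∧ SignConsistent sign A e ∧ x ∉ e}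
      ((fun v => s(x, v)) '' consistentNbrs G sign A x) := by
    rw [disjoint_left]
    rintro e ⟨-, -, hxe⟩ ⟨w, -, rfl⟩
    exact hxe (Sym2.mem_mk_left x w)
  have hinj : Function.Injective fun v => s(x, v) := fun _ _ => Sym2.congr_right.mp
  rw [balCount, hsplit, ncard_union_eq hdisj, ncard_image_of_injective _ hinj]

/-- Moving `x` across the partition only changes the status of the edges at `x`. -/
lemma balCount_le_balCount_sdiff_singleton [Finite V] (A : Set V) (x : V)
    (h : (consistentNbrs G sign A x).ncard ≤ (consistentNbrs G sign (A \ {x}) x).ncard) :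
    balCount G sign A ≤ balCount G sign (A \ {x}) := by
  have hoff : {e | e ∈ G.edgeSet ∧ SignConsistent sign (A \ {x}) e ∧ x ∉ e} =
      {e | e ∈ G.edgeSet ∧ SignConsistent sign A e ∧ x ∉ e} := by
    ext e
    induction e using Sym2.ind with
    | _ u v =>
      simp only [mem_ofPred_eq, signConsistent_mk_iff, Sym2.mem_iff, not_or, mem_sdiff,
        mem_singleton_iff]
      grind
  rw [balCount_eq_add_ncard_consistentNbrs G sign A x,
    balCount_eq_add_ncard_consistentNbrs G sign (A \ {x}) x, hoff]
  exact Nat.add_le_add_left h _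

end Balanced

section Twins

variable (G : SimpleGraph V) (sign : Sym2 V → Bool)

def IsSignedTwin (x y : V) : Prop :=
  ∀ v, v ≠ x → v ≠ y →
    (G.Adj x v ↔ G.Adj y v) ∧ (G.Adj x v → sign s(x, v) = sign s(y, v))

variable {G sign} [DecidableEq V] {x y : V}

lemma IsSignedTwin.adj_swap (h : IsSignedTwin G sign x y) {u v : V} (huv : G.Adj u v) :
    G.Adj (Equiv.swap x y u) (Equiv.swap x y v) ∧
      sign s(Equiv.swap x y u, Equiv.swap x y v) = sign s(u, v) := by
  simp only [Equiv.swap_apply_def]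
  split_ifs <;> subst_vars <;>
    grind [SimpleGraph.adj_comm, SimpleGraph.Adj.ne, Sym2.eq_swap, IsSignedTwin]

def IsSignedTwin.swapIso (h : IsSignedTwin G sign x y) : G ≃g G where
  toEquiv := Equiv.swap x y
  map_rel_iff' {u v} := ⟨fun huv => by simpa using (h.adj_swap huv).1,
    fun huv => (h.adj_swap huv).1⟩

lemma IsSignedTwin.balCount_swap_preimage [Finite V] (h : IsSignedTwin G sign x y)
    (A : Set V) : balCount G sign (Equiv.swap x y ⁻¹' A) = balCount G sign A :=
  balCount_preimage_iso G sign h.swapIso (fun _ _ huv => (h.adj_swap huv).2) A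

end Twins

section NegativeClique

variable {G : SimpleGraph V} {sign : Sym2 V → Bool} {S C : Set V}

lemma isSignedTwin_of_mem_negClique (hclique : G.IsClique C)
    (hneg : ∀ u ∈ C, ∀ v ∈ C, u ≠ v → sign s(u, v) = false) {x y : V} (hx : x ∈ C)
    (hy : y ∈ C) (hxN : ∀ v, G.Adj x v → v ∈ C ∪ S)
    (hyN : ∀ v, G.Adj y v → v ∈ C ∪ S)
    (hS : ∀ s ∈ S, ∀ b,
      (G.Adj x s ∧ sign s(x, s) = b) ↔ (G.Adj y s ∧ sign s(y, s) = b)) :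
    IsSignedTwin G sign x y := by
  intro v hvx hvy
  by_cases hvC : v ∈ C
  · exact ⟨iff_of_true (hclique hx hvC hvx.symm) (hclique hy hvC hvy.symm), fun _ => by
      rw [hneg x hx v hvC hvx.symm, hneg y hy v hvC hvy.symm]⟩
  by_cases hvS : v ∈ S
  · exact ⟨⟨fun h => ((hS v hvS _).mp ⟨h, rfl⟩).1,
      fun h => ((hS v hvS _).mpr ⟨h, rfl⟩).1⟩, fun h => ((hS v hvS _).mp ⟨h, rfl⟩).2.symm⟩
  · have hN : ∀ z, (∀ v, G.Adj z v → v ∈ C ∪ S) → ¬G.Adj z v := fun z hzN h =>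
      (hzN v h).elim hvC hvS
    exact ⟨iff_of_false (hN x hxN) (hN y hyN), fun h => absurd h (hN x hxN)⟩

/-- Moving `x` out of `A ⊇ X` gains the negative clique edges to `X \ {x}` and loses at most
the edges to `C \ X` and to `N(X) ∩ S`. -/
lemma ncard_consistentNbrs_le_sdiff_singleton [Finite V] {X A : Set V} (hCS : Disjoint C S)
    (hclique : G.IsClique C) (hneg : ∀ u ∈ C, ∀ v ∈ C, u ≠ v → sign s(u, v) = false)
    (hXC : X ⊆ C) (hXsize : C.ncard + (nbhd G X ∩ S).ncard < 2 * X.ncard)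
    (hXnb : ∀ x ∈ X, ∀ v : V, G.Adj x v → v ∈ C ∪ S) (hXA : X ⊆ A) {x : V}
    (hx : x ∈ X) :
    (consistentNbrs G sign A x).ncard ≤ (consistentNbrs G sign (A \ {x}) x).ncard := by
  have hgain : X \ {x} ⊆ consistentNbrs G sign (A \ {x}) x := by
    rintro v ⟨hvX, hvx⟩
    have hxv : x ≠ v := Ne.symm hvx
    refine ⟨hclique (hXC hx) (hXC hvX) hxv, ?_⟩
    rw [signConsistent_mk_iff, hneg x (hXC hx) v (hXC hvX) hxv]
    simp [hXA hvX, hvx]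
  have hloss : consistentNbrs G sign A x ⊆ (C \ X) ∪ (nbhd G X ∩ S) := by
    rintro v ⟨hadj, hc⟩
    rcases hXnb x hx v hadj with hvC | hvS
    · refine Or.inl ⟨hvC, fun hvX => ?_⟩
      rw [signConsistent_mk_iff, hneg x (hXC hx) v hvC hadj.ne] at hc
      simp [hXA hx, hXA hvX] at hc
    · exact Or.inr ⟨⟨fun hvX => disjoint_left.mp hCS (hXC hvX) hvS, x, hx, hadj⟩, hvS⟩
  calc (consistentNbrs G sign A x).ncard
      ≤ ((C \ X) ∪ (nbhd G X ∩ S)).ncard := ncard_le_ncard hloss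
    _ ≤ (C \ X).ncard + (nbhd G X ∩ S).ncard := ncard_union_le _ _
    _ ≤ (X \ {x}).ncard := by
      rw [ncard_sdiff hXC, ncard_sdiff_singleton_of_mem hx]
      have := ncard_le_ncard hXC
      omega
    _ ≤ (consistentNbrs G sign (A \ {x}) x).ncard := ncard_le_ncard hgain

end NegativeClique

end

/-- Let `S ⊆ V(G)` and let `C ⊆ V(G) ∖ S` induce a clique all of
whose edges are negative. Let `X ⊆ C` satisfy `|X| > (|C| + |N_G(X) ∩ S|)/2`, all
neighbors of `X` lie in `C ∪ S`, and all vertices of `X` have the same positive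
neighbors in `S` and the same negative neighbors in `S`. Then for any distinct
`x₁, x₂ ∈ X` some partition `(V₁, V₂) = (A, Aᶜ)` induces a balanced subgraph with
`β(G)` edges, with `x₁ ∈ V₁` and `x₂ ∈ V₂`. -/
theorem stmt16 {V : Type*} [Fintype V] (G : SimpleGraph V) (sign : Sym2 V → Bool)
    (S C X : Set V) (hCS : Disjoint C S) (hclique : G.IsClique C)
    (hneg : ∀ u ∈ C, ∀ v ∈ C, u ≠ v → sign s(u, v) = false)
    (hXC : X ⊆ C)
    (hXsize : ((C.ncard : ℚ) + ((nbhd G X ∩ S).ncard : ℚ)) / 2 < (X.ncard : ℚ))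
    (hXnb : ∀ x ∈ X, ∀ v : V, G.Adj x v → v ∈ C ∪ S)
    (hsame : ∀ x₁ ∈ X, ∀ x₂ ∈ X, ∀ s ∈ S,
      ((G.Adj x₁ s ∧ sign s(x₁, s) = true) ↔ (G.Adj x₂ s ∧ sign s(x₂, s) = true)) ∧
      ((G.Adj x₁ s ∧ sign s(x₁, s) = false) ↔ (G.Adj x₂ s ∧ sign s(x₂, s) = false))) :
    ∀ x₁ ∈ X, ∀ x₂ ∈ X, x₁ ≠ x₂ →
      ∃ A : Set V, balCount G sign A = beta G sign ∧ x₁ ∈ A ∧ x₂ ∉ A := by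
  classical
  intro x₁ hx₁ x₂ hx₂ hne
  obtain ⟨A, hA, hx₁A⟩ := exists_balCount_eq_beta_and_mem G sign x₁
  by_cases hx₂A : x₂ ∉ A
  · exact ⟨A, hA, hx₁A, hx₂A⟩
  rw [not_not] at hx₂A
  by_cases hXA : X ⊆ A
  · have hsize : C.ncard + (nbhd G X ∩ S).ncard < 2 * X.ncard := by
      exact_mod_cast (by linarith : ((C.ncard : ℚ) + (nbhd G X ∩ S).ncard) < 2 * X.ncard)
    have hflip := balCount_le_balCount_sdiff_singleton G sign A x₂
      (ncard_consistentNbrs_le_sdiff_singleton hCS hclique hneg hXC hsize hXnb hXA hx₂)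
    exact ⟨A \ {x₂}, le_antisymm (balCount_le_beta G sign _) (hA ▸ hflip), ⟨hx₁A, hne⟩,
      fun h => h.2 rfl⟩
  · obtain ⟨x', hx', hx'A⟩ := not_subset.mp hXA
    have htwin : IsSignedTwin G sign x₂ x' :=
      isSignedTwin_of_mem_negClique hclique hneg (hXC hx₂) (hXC hx') (hXnb x₂ hx₂)
        (hXnb x' hx') fun s hs b => by
          cases b
          exacts [(hsame x₂ hx₂ x' hx' s hs).2, (hsame x₂ hx₂ x' hx' s hs).1]
    refine ⟨Equiv.swap x₂ x' ⁻¹' A, (htwin.balCount_swap_preimage A).trans hA, ?_, ?_⟩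
    · rwa [mem_preimage, Equiv.swap_apply_of_ne_of_ne hne (ne_of_mem_of_not_mem hx₁A hx'A)]
    · rwa [mem_preimage, Equiv.swap_apply_left]
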